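/- arXiv:1707.03212 — 4 statements merged into one kernel-verified Lean document; each statement's English description precedes it below -/
import Mathlib

section
/- Let k ≥ 1, f_i, μ_i > 0 with ∑ f_i = 1, β, γ > 0. Define V(y) = ∑_i y_i(1 + ln y_i − ln((β/γ)μ_i)) − (∑_i y_i) ln(∑_i y_i) + ∑_i (f_i − y_i) ln(f_i − y_i) for y with 0 < y_i < f_i. Then ∂V/∂y_i = ln( y_i / ((β/γ) μ_i (f_i − y_i) ∑_j y_j) ), and consequently H(y, ∂V/∂y) = 0, where H(y,θ) = γ ∑_i (e^{θ_i} − 1)·((β/γ)(∑_j y_j) μ_i (f_i − y_i) − y_i e^{−θ_i}). -/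
noncomputable def Vsusc (k : ℕ) (f mu : Fin k → ℝ) (β γ : ℝ) (y : Fin k → ℝ) : ℝ :=
  (∑ i, y i * (1 + Real.log (y i) - Real.log ((β / γ) * mu i)))
    - (∑ i, y i) * Real.log (∑ i, y i)
    + ∑ i, (f i - y i) * Real.log (f i - y i)

open Real Finset

theorem hasDerivAt_sum_update {ι : Type*} [Fintype ι] [DecidableEq ι] (g : ι → ℝ → ℝ)
    (y : ι → ℝ) (i : ι) {g' : ℝ} (hg : HasDerivAt (g i) g' (y i)) :
    HasDerivAt (fun t => ∑ j, g j (Function.update y i t j)) g' (y i) := by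
  have hterm : ∀ j ∈ univ, HasDerivAt (fun t => g j (Function.update y i t j))
      (if j = i then g' else 0) (y i) := by
    intro j _
    by_cases hji : j = i
    · subst hji
      simpa using hg
    · simpa [hji, Function.update_of_ne hji] using hasDerivAt_const (y i) (g j (y j))
  simpa using HasDerivAt.fun_sum hterm

theorem hasDerivAt_mul_one_add_log_sub {x : ℝ} (hx : x ≠ 0) (c : ℝ) :
    HasDerivAt (fun s => s * (1 + log s - c)) (log x + 2 - c) x := by
  have hsplit : (fun s => s * (1 + log s - c)) = fun s => s * log s + s * (1 - c) := by
    funext s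
    ring
  rw [hsplit]
  exact ((hasDerivAt_mul_log hx).add ((hasDerivAt_id x).mul_const (1 - c))).congr_deriv (by ring)

theorem hasDerivAt_sub_mul_log_sub {a x : ℝ} (hx : a - x ≠ 0) :
    HasDerivAt (fun s => (a - s) * log (a - s)) (-(log (a - x) + 1)) x := by
  exact ((hasDerivAt_mul_log hx).comp x ((hasDerivAt_id x).const_sub a)).congr_deriv (by ring)

theorem hasDerivAt_Vsusc_update {k : ℕ} (f mu : Fin k → ℝ) (β γ : ℝ) (y : Fin k → ℝ)
    (i : Fin k) (hc : (β / γ) * mu i ≠ 0) (hy : y i ≠ 0) (hfy : f i - y i ≠ 0)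
    (hS : ∑ j, y j ≠ 0) :
    HasDerivAt (fun t => Vsusc k f mu β γ (Function.update y i t))
      (log (y i / ((β / γ) * mu i * (f i - y i) * ∑ j, y j))) (y i) := by
  have hA := hasDerivAt_sum_update (fun j s => s * (1 + log s - log ((β / γ) * mu j))) y i
    (hasDerivAt_mul_one_add_log_sub hy _)
  have hsum := hasDerivAt_sum_update (fun _ s => s) y i (hasDerivAt_id (y i))
  have hSlog := (hasDerivAt_mul_log (x := ∑ j, Function.update y i (y i) j)
    (by simpa using hS)).comp (y i) hsum
  have hB := hasDerivAt_sum_update (fun j s => (f j - s) * log (f j - s)) y i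
    (hasDerivAt_sub_mul_log_sub hfy)
  refine ((hA.sub hSlog).add hB).congr_deriv ?_
  rw [log_div hy (by positivity), log_mul (by positivity) hS, log_mul hc hfy]
  simp only [Function.update_eq_self]
  ring

theorem mul_exp_neg_log_div {a b : ℝ} (ha : 0 < a) (hb : 0 < b) :
    a * exp (-log (a / b)) = b := by
  rw [exp_neg, exp_log (div_pos ha hb), inv_div, mul_div_cancel₀ _ ha.ne']

theorem stmt_6_general (k : ℕ) (f mu : Fin k → ℝ)
    (hm : ∀ i, 0 < mu i)
    (β γ : ℝ) (hβ : 0 < β) (hγ : 0 < γ)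
    (y : Fin k → ℝ) (hy : ∀ i, y i ∈ Set.Ioo 0 (f i))
    (θ : Fin k → ℝ)
    (hθ : ∀ i, θ i = Real.log (y i / ((β / γ) * mu i * (f i - y i) * ∑ j, y j))) :
    (∀ i, HasDerivAt (fun t => Vsusc k f mu β γ (Function.update y i t))
        (Real.log (y i / ((β / γ) * mu i * (f i - y i) * ∑ j, y j))) (y i)) ∧
      γ * ∑ i, (Real.exp (θ i) - 1) *
        ((β / γ) * (∑ j, y j) * mu i * (f i - y i) - y i * Real.exp (-θ i)) = 0 := by
  have hc : ∀ i, 0 < (β / γ) * mu i := fun i => mul_pos (div_pos hβ hγ) (hm i)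
  have hfy : ∀ i, 0 < f i - y i := fun i => sub_pos.mpr (hy i).2
  have hS : ∀ i : Fin k, 0 < ∑ j, y j := fun i =>
    sum_pos (fun j _ => (hy j).1) ⟨i, mem_univ i⟩
  refine ⟨fun i => hasDerivAt_Vsusc_update f mu β γ y i (hc i).ne' (hy i).1.ne' (hfy i).ne'
    (hS i).ne', mul_eq_zero_of_right _ (sum_eq_zero fun i _ => ?_)⟩
  have hbalance := mul_exp_neg_log_div (hy i).1 (mul_pos (mul_pos (hc i) (hfy i)) (hS i))
  rw [← hθ i] at hbalance
  rw [hbalance]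
  ring

theorem stmt_6 (k : ℕ) (hk : 1 ≤ k) (f mu : Fin k → ℝ)
    (hf : ∀ i, 0 < f i) (hfs : ∑ i, f i = 1) (hm : ∀ i, 0 < mu i)
    (β γ : ℝ) (hβ : 0 < β) (hγ : 0 < γ)
    (y : Fin k → ℝ) (hy : ∀ i, y i ∈ Set.Ioo 0 (f i))
    (θ : Fin k → ℝ)
    (hθ : ∀ i, θ i = Real.log (y i / ((β / γ) * mu i * (f i - y i) * ∑ j, y j))) :
    (∀ i, HasDerivAt (fun t => Vsusc k f mu β γ (Function.update y i t))
        (Real.log (y i / ((β / γ) * mu i * (f i - y i) * ∑ j, y j))) (y i)) ∧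
      γ * ∑ i, (Real.exp (θ i) - 1) *
        ((β / γ) * (∑ j, y j) * mu i * (f i - y i) - y i * Real.exp (-θ i)) = 0 :=
  stmt_6_general k f mu hm β γ hβ hγ y hy θ hθ
end

section
/- Let k ≥ 1, f_i, μ_i > 0 with ∑ f_i = 1, β, γ > 0, and let D > 0 satisfy (β/γ) ∑_j μ_j f_j / (1 + μ_j D) = 1. Let y*_i = μ_i f_i D/(1 + μ_i D) and V as defined below. Then V(0) − V(y*) = ∑_i f_i ln(1 + μ_i D) − (γ/β) D. -/
open Real Finset

lemma Vsusc_zero (k : ℕ) (f mu : Fin k → ℝ) (β γ : ℝ) :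
    Vsusc k f mu β γ 0 = ∑ i, f i * log (f i) := by
  simp [Vsusc]

lemma mul_log_eq_of_eq_mul_mul {y a b c : ℝ} (h : y = a * b * c) :
    y * log y = y * (log a + log b + log c) := by
  rcases eq_or_ne y 0 with rfl | hy
  · simp
  obtain ⟨⟨ha, hb⟩, hc⟩ : (a ≠ 0 ∧ b ≠ 0) ∧ c ≠ 0 := by
    simpa [h, not_or] using hy
  rw [h, log_mul (mul_ne_zero ha hb) hc, log_mul ha hb]

lemma Vsusc_of_critical {k : ℕ} {f mu y : Fin k → ℝ} {β γ : ℝ}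
    (hcrit : ∀ i, y i = (β / γ) * mu i * (∑ j, y j) * (f i - y i)) :
    Vsusc k f mu β γ y = ∑ i, y i + ∑ i, f i * log (f i - y i) := by
  set S := ∑ j, y j
  have hterm : ∀ i, y i * (1 + log (y i) - log ((β / γ) * mu i))
      = y i * (1 + log S) + y i * log (f i - y i) := fun i => by
    linear_combination mul_log_eq_of_eq_mul_mul (hcrit i)
  have hgap : ∑ i, y i * log (f i - y i) + ∑ i, (f i - y i) * log (f i - y i)
      = ∑ i, f i * log (f i - y i) := by
    rw [← sum_add_distrib]
    exact sum_congr rfl fun i _ => by ring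
  simp only [Vsusc, hterm, sum_add_distrib, ← sum_mul]
  linear_combination hgap

theorem stmt_7_general (k : ℕ) (f mu : Fin k → ℝ)
    (hf : ∀ i, 0 < f i)
    (hm : ∀ i, 0 < mu i)
    (β γ : ℝ) (hβ : 0 < β) (hγ : 0 < γ)
    (D : ℝ) (hD : 0 < D)
    (hDeq : (β / γ) * ∑ j, mu j * f j / (1 + mu j * D) = 1)
    (ystar : Fin k → ℝ)
    (hy : ∀ i, ystar i = mu i * f i * D / (1 + mu i * D)) :
    Vsusc k f mu β γ 0 - Vsusc k f mu β γ ystar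
      = (∑ i, f i * Real.log (1 + mu i * D)) - (γ / β) * D := by
  have hden : ∀ i, 1 + mu i * D ≠ 0 := fun i => by nlinarith [hm i]
  have hgap : ∀ i, f i - ystar i = f i / (1 + mu i * D) := fun i => by
    rw [hy i]; field_simp [hden i]; ring
  have hsum : ∑ i, ystar i = (γ / β) * D := by
    have hDeq' : ∑ j, mu j * f j / (1 + mu j * D) = γ / β := by
      rw [← inv_div]; exact eq_inv_of_mul_eq_one_right hDeq
    simp only [hy, mul_div_right_comm _ D, ← sum_mul, hDeq']
  have hcrit : ∀ i, ystar i = (β / γ) * mu i * (∑ j, ystar j) * (f i - ystar i) := fun i => by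
    rw [hsum, hgap, hy]; field_simp
  rw [Vsusc_zero, Vsusc_of_critical hcrit, hsum]
  simp only [hgap, log_div (hf _).ne' (hden _), mul_sub, sum_sub_distrib]
  ring

theorem stmt_7 (k : ℕ) (hk : 1 ≤ k) (f mu : Fin k → ℝ)
    (hf : ∀ i, 0 < f i) (hfs : ∑ i, f i = 1)
    (hm : ∀ i, 0 < mu i) (hms : ∑ i, mu i * f i = 1)
    (β γ : ℝ) (hβ : 0 < β) (hγ : 0 < γ)
    (D : ℝ) (hD : 0 < D)
    (hDeq : (β / γ) * ∑ j, mu j * f j / (1 + mu j * D) = 1)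
    (ystar : Fin k → ℝ)
    (hy : ∀ i, ystar i = mu i * f i * D / (1 + mu i * D)) :
    Vsusc k f mu β γ 0 - Vsusc k f mu β γ ystar
      = (∑ i, f i * Real.log (1 + mu i * D)) - (γ / β) * D :=
  stmt_7_general k f mu hf hm β γ hβ hγ D hD hDeq ystar hy
end

section
/- Let f_i > 0 with ∑ f_i = 1, β, γ > 0, and let λ^{(1)}, λ^{(2)} ∈ (0,∞)^k with ∑ f_i λ^{(1)}_i = ∑ f_i λ^{(2)}_i = 1 and ∑_i f_i φ(λ^{(1)}_i) ≤ ∑_i f_i φ(λ^{(2)}_i) for all convex φ: (0,∞) → ℝ. For m = 1,2, assume D^{(m)} > 0 solves (β/γ) ∑_i f_i λ^{(m)}_i/(1 + λ^{(m)}_i D^{(m)}) = 1, and set A^{(m)} = ∑_i f_i ln(1 + λ^{(m)}_i D^{(m)}) − (γ/β) D^{(m)}. Then A^{(1)} ≥ A^{(2)}. -/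
open Finset Real

/- With ψ_λ(z) = ∑ f_i log(1 + λ_i z) - (γ/β) z, we have A^{(m)} = ψ_{λ^{(m)}}(D^{(m)}).
ψ_{λ^{(1)}} is concave and its derivative vanishes at D^{(1)} (this is the equation defining
D^{(1)}), so D^{(1)} maximizes it: ψ_{λ^{(1)}}(D^{(2)}) ≤ A^{(1)}. On the other hand
x ↦ log(1 + D^{(2)} x) is concave, so the majorization hypothesis applied to its negative
gives A^{(2)} ≤ ψ_{λ^{(1)}}(D^{(2)}). -/

theorem concaveOn_log_one_add_mul {c : ℝ} (hc : 0 ≤ c) :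
    ConcaveOn ℝ (Set.Ici 0) (fun x : ℝ => log (1 + c * x)) := by
  have h := strictConcaveOn_log_Ioi.concaveOn.comp_affineMap (AffineMap.lineMap (1 : ℝ) (1 + c))
  refine (h.subset (fun x hx => ?_) (convex_Ici 0)).congr fun x _ => ?_
  · simp only [Set.mem_preimage, AffineMap.lineMap_apply_ring, Set.mem_Ioi] at hx ⊢
    nlinarith [mul_nonneg hc (Set.mem_Ici.mp hx)]
  · simp only [Function.comp_apply, AffineMap.lineMap_apply_ring]
    ring_nf

theorem log_le_log_add_div_mul_sub {a x y : ℝ} (hx : 0 < 1 + a * x) (hy : 0 < 1 + a * y) :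
    log (1 + a * y) ≤ log (1 + a * x) + a / (1 + a * x) * (y - x) := by
  have h := log_le_sub_one_of_pos (div_pos hy hx)
  rw [log_div hy.ne' hx.ne'] at h
  have hsub : (1 + a * y) / (1 + a * x) - 1 = a / (1 + a * x) * (y - x) := by
    field_simp
    ring
  linarith

section

variable {ι : Type*} [Fintype ι] {f lam : ι → ℝ}

theorem sum_log_sub_le_of_sum_div_eq (hf : ∀ i, 0 ≤ f i) (hlam : ∀ i, 0 ≤ lam i)
    {c x y : ℝ} (hx : 0 ≤ x) (hy : 0 ≤ y)
    (hcrit : ∑ i, f i * lam i / (1 + lam i * x) = c) :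
    ∑ i, f i * log (1 + lam i * y) - c * y ≤ ∑ i, f i * log (1 + lam i * x) - c * x := by
  have hpos : ∀ i {z : ℝ}, 0 ≤ z → 0 < 1 + lam i * z := fun i z hz => by
    nlinarith [mul_nonneg (hlam i) hz]
  have htangent : ∑ i, f i * log (1 + lam i * y) ≤
      ∑ i, (f i * log (1 + lam i * x) + f i * lam i / (1 + lam i * x) * (y - x)) :=
    sum_le_sum fun i _ => by
      have h := mul_le_mul_of_nonneg_left
        (log_le_log_add_div_mul_sub (hpos i hx) (hpos i hy)) (hf i)
      rw [mul_add, ← mul_assoc, ← mul_div_assoc] at h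
      exact h
  rw [sum_add_distrib, ← sum_mul, hcrit] at htangent
  linarith

end

theorem stmt_11_general (k : ℕ) (f lam1 lam2 : Fin k → ℝ)
    (hf : ∀ i, 0 < f i)
    (hl1 : ∀ i, 0 < lam1 i)
    (hmaj : ∀ φ : ℝ → ℝ, ConvexOn ℝ (Set.Ioi 0) φ →
      ∑ i, f i * φ (lam1 i) ≤ ∑ i, f i * φ (lam2 i))
    (β γ : ℝ) (hβ : 0 < β) (hγ : 0 < γ)
    (D1 D2 : ℝ) (hD1 : 0 < D1) (hD2 : 0 < D2)
    (hDeq1 : (β / γ) * ∑ i, f i * lam1 i / (1 + lam1 i * D1) = 1)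
    (A1 A2 : ℝ)
    (hA1 : A1 = (∑ i, f i * Real.log (1 + lam1 i * D1)) - (γ / β) * D1)
    (hA2 : A2 = (∑ i, f i * Real.log (1 + lam2 i * D2)) - (γ / β) * D2) :
    A2 ≤ A1 := by
  have hcrit : ∑ i, f i * lam1 i / (1 + lam1 i * D1) = γ / β := by
    rw [div_mul_eq_mul_div, div_eq_one_iff_eq hγ.ne'] at hDeq1
    rw [eq_div_iff hβ.ne', mul_comm, hDeq1]
  have hmax := sum_log_sub_le_of_sum_div_eq (fun i => (hf i).le) (fun i => (hl1 i).le)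
    hD1.le hD2.le hcrit
  have hlog : ∑ i, f i * log (1 + lam2 i * D2) ≤ ∑ i, f i * log (1 + lam1 i * D2) := by
    have h := hmaj _ ((concaveOn_log_one_add_mul hD2.le).subset Set.Ioi_subset_Ici_self
      (convex_Ioi 0)).neg
    simp only [Pi.neg_apply, mul_neg, sum_neg_distrib, neg_le_neg_iff] at h
    simpa only [mul_comm D2] using h
  linarith

theorem stmt_11 (k : ℕ) (hk : 1 ≤ k) (f lam1 lam2 : Fin k → ℝ)
    (hf : ∀ i, 0 < f i) (hfs : ∑ i, f i = 1)
    (hl1 : ∀ i, 0 < lam1 i) (hl2 : ∀ i, 0 < lam2 i)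
    (hls1 : ∑ i, f i * lam1 i = 1) (hls2 : ∑ i, f i * lam2 i = 1)
    (hmaj : ∀ φ : ℝ → ℝ, ConvexOn ℝ (Set.Ioi 0) φ →
      ∑ i, f i * φ (lam1 i) ≤ ∑ i, f i * φ (lam2 i))
    (β γ : ℝ) (hβ : 0 < β) (hγ : 0 < γ)
    (D1 D2 : ℝ) (hD1 : 0 < D1) (hD2 : 0 < D2)
    (hDeq1 : (β / γ) * ∑ i, f i * lam1 i / (1 + lam1 i * D1) = 1)
    (hDeq2 : (β / γ) * ∑ i, f i * lam2 i / (1 + lam2 i * D2) = 1)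
    (A1 A2 : ℝ)
    (hA1 : A1 = (∑ i, f i * Real.log (1 + lam1 i * D1)) - (γ / β) * D1)
    (hA2 : A2 = (∑ i, f i * Real.log (1 + lam2 i * D2)) - (γ / β) * D2) :
    A2 ≤ A1 :=
  stmt_11_general k f lam1 lam2 hf hl1 hmaj β γ hβ hγ D1 D2 hD1 hD2 hDeq1 A1 A2 hA1 hA2
end

section
/- Let k, s ≥ 1, f_i, μ_i > 0 with ∑ f_i = 1, β, γ > 0. Define V(y) for y = (y_{iv})_{i≤k, v≤s} with y_{iv} > 0 and ∑_v y_{iv} < f_i by V(y) = ∑_{i,v} y_{iv}(1 + ln y_{iv} − ln((β/(sγ))μ_i)) − (∑_{i,v} y_{iv}) ln(∑_{i,v} y_{iv}) + ∑_i (f_i − ∑_v y_{iv}) ln(f_i − ∑_v y_{iv}). Then H(y, ∂V/∂y) = 0, where H(y,θ) = β(∑_j ∑_v y_{jv})(∑_i μ_i(f_i − ∑_v y_{iv})(e^{θ_{i1}} − 1)) + sγ ∑_i ∑_{v=1}^{s−1} y_{iv}(e^{−θ_{iv}+θ_{i,v+1}} − 1) + sγ ∑_i y_{is}(e^{−θ_{is}}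 − 1). -/
/-!
Group by group the Hamiltonian vanishes. With `P_i = (β/(sγ)) μ_i (f_i - ∑_v y_{iv}) Y`, where
`Y = ∑_{j,v} y_{jv}`, the gradient of `V` satisfies `e^{θ_{iv}} = y_{iv} / P_i`. The infection
term of group `i` is then `sγ y_{i0} - β Y μ_i (f_i - ∑_v y_{iv})`, the stage transitions
telescope to `sγ (y_{i,s-1} - y_{i0})`, and recovery contributes `sγ (P_i - y_{i,s-1})`; these
add up to `sγ P_i - β Y μ_i (f_i - ∑_v y_{iv}) = 0`.
-/

open Finset Real

-- The Hamiltonian of one group `i`, with `a = β Y μ_i (f_i - ∑_v y_{iv})`, `r = sγ` and `n = s - 1`.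
theorem stage_chain_hamiltonian_eq_zero {y θ : ℕ → ℝ} {a r : ℝ} (n : ℕ)
    (hθ : ∀ v ≤ n, exp (θ v) = r / a * y v) :
    a * (exp (θ 0) - 1) + r * ∑ v ∈ range n, y v * (exp (-θ v + θ (v + 1)) - 1)
      + r * (y n * (exp (-θ n) - 1)) = 0 := by
  have hne : ∀ v ≤ n, r / a * y v ≠ 0 := fun v hv => hθ v hv ▸ (exp_pos _).ne'
  obtain ⟨hr, ha⟩ := div_ne_zero_iff.1 (left_ne_zero_of_mul (hne 0 n.zero_le))
  have hstep : ∀ v ∈ range n, y v * (exp (-θ v + θ (v + 1)) - 1) = y (v + 1) - y v := by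
    intro v hv
    have hvn : v < n := mem_range.1 hv
    rw [exp_add, exp_neg, hθ v hvn.le, hθ (v + 1) hvn]
    field_simp [right_ne_zero_of_mul (hne v hvn.le)]
  rw [sum_congr rfl hstep, sum_range_sub y, exp_neg, hθ 0 n.zero_le,
    hθ n le_rfl]
  field_simp [right_ne_zero_of_mul (hne n le_rfl)]
  ring

theorem stmt_16_general (k s : ℕ) (hs : 1 ≤ s) (f mu : Fin k → ℝ)
    (hm : ∀ i, 0 < mu i)
    (β γ : ℝ) (hβ : 0 < β) (hγ : 0 < γ)
    (y : Fin k → ℕ → ℝ)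
    (hy : ∀ i, ∀ v ∈ Finset.range s, 0 < y i v)
    (hyf : ∀ i, ∑ v ∈ Finset.range s, y i v < f i)
    (θ : Fin k → ℕ → ℝ)
    (hθ : ∀ i, ∀ v ∈ Finset.range s, θ i v =
      Real.log (y i v / ((β / (s * γ)) * mu i * (f i - ∑ w ∈ Finset.range s, y i w)
        * ∑ j, ∑ w ∈ Finset.range s, y j w))) :
    β * (∑ j, ∑ v ∈ Finset.range s, y j v)
        * (∑ i, mu i * (f i - ∑ v ∈ Finset.range s, y i v) * (Real.exp (θ i 0) - 1))
      + s * γ * (∑ i, ∑ v ∈ Finset.range (s - 1),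
          y i v * (Real.exp (-θ i v + θ i (v + 1)) - 1))
      + s * γ * (∑ i, y i (s - 1) * (Real.exp (-θ i (s - 1)) - 1)) = 0 := by
  set Y := ∑ j, ∑ v ∈ range s, y j v
  have hsγ : 0 < (s : ℝ) * γ := mul_pos (by exact_mod_cast hs) hγ
  have hY : ∀ i, 0 < Y := fun i =>
    (sum_pos (hy i) (nonempty_range_iff.2 (by omega))).trans_le <|
      single_le_sum (fun j _ => sum_nonneg fun v hv => (hy j v hv).le) (mem_univ i)
  have hexp : ∀ i, ∀ v ≤ s - 1,
      exp (θ i v) = s * γ / (β * Y * (mu i * (f i - ∑ w ∈ range s, y i w))) * y i v := by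
    intro i v hv
    have hvs : v ∈ range s := mem_range.2 (by omega)
    have hP : 0 < β / (s * γ) * mu i * (f i - ∑ w ∈ range s, y i w) * Y :=
      mul_pos (mul_pos (mul_pos (div_pos hβ hsγ) (hm i)) (sub_pos.2 (hyf i))) (hY i)
    rw [hθ i v hvs, exp_log (div_pos (hy i v hvs) hP)]
    field_simp
  clear_value Y
  rw [mul_sum, mul_sum, mul_sum, ← sum_add_distrib, ← sum_add_distrib]
  refine sum_eq_zero fun i _ => ?_
  rw [← stage_chain_hamiltonian_eq_zero (s - 1) (hexp i)]
  ring

theorem stmt_16 (k s : ℕ) (hk : 1 ≤ k) (hs : 1 ≤ s) (f mu : Fin k → ℝ)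
    (hf : ∀ i, 0 < f i) (hfs : ∑ i, f i = 1) (hm : ∀ i, 0 < mu i)
    (β γ : ℝ) (hβ : 0 < β) (hγ : 0 < γ)
    (y : Fin k → ℕ → ℝ)
    (hy : ∀ i, ∀ v ∈ Finset.range s, 0 < y i v)
    (hyf : ∀ i, ∑ v ∈ Finset.range s, y i v < f i)
    (θ : Fin k → ℕ → ℝ)
    (hθ : ∀ i, ∀ v ∈ Finset.range s, θ i v =
      Real.log (y i v / ((β / (s * γ)) * mu i * (f i - ∑ w ∈ Finset.range s, y i w)
        * ∑ j, ∑ w ∈ Finset.range s, y j w))) :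
    β * (∑ j, ∑ v ∈ Finset.range s, y j v)
        * (∑ i, mu i * (f i - ∑ v ∈ Finset.range s, y i v) * (Real.exp (θ i 0) - 1))
      + s * γ * (∑ i, ∑ v ∈ Finset.range (s - 1),
          y i v * (Real.exp (-θ i v + θ i (v + 1)) - 1))
      + s * γ * (∑ i, y i (s - 1) * (Real.exp (-θ i (s - 1)) - 1)) = 0 :=
  stmt_16_general k s hs f mu hm β γ hβ hγ y hy hyf θ hθ
end
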